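/- arXiv:1702.05605 — 3 statements merged into one kernel-verified Lean document; each statement's English description precedes it below -/
import Mathlib

section
/- Let R be a ring with 3 in its Jacobson radical J(R). Then R is trinil clean if and only if the quotient ring R/J(R) is trinil clean and every element of J(R) is nilpotent. -/
def TrinilClean (R : Type*) [Ring R] : Prop :=
  ∀ a : R, ∃ e w : R, e ^ 3 = e ∧ IsNilpotent w ∧ a = e + w

/-!
When `2` is invertible, a tripotent `t` is the difference `p - q` of the orthogonal idempotents
`p = (t² + t) / 2` and `q = (t² - t) / 2`. Orthogonal idempotents lift along nil ideals, hence so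
do tripotents; since `3 ∈ J(R)` makes `2 = -1` invertible modulo `J(R)`, trinil cleanness lifts
from `R / J(R)` to `R` as soon as `J(R)` is nil. Conversely, if `x ∈ J(R)` is `e + w` with `e`
tripotent and `w` nilpotent, then `e ≡ -w` is a nilpotent tripotent modulo `J(R)`, so `e ∈ J(R)`;
but a tripotent in the Jacobson radical vanishes, so `x = w` is nilpotent.
-/

open Ideal

lemma eq_zero_of_pow_three_eq_self_of_isNilpotent {M : Type*} [MonoidWithZero M] {e : M}
    (he : e ^ 3 = e) (hn : IsNilpotent e) : e = 0 := by
  have hidem : IsIdempotentElem (e ^ 2) := by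
    rw [IsIdempotentElem, ← pow_add, show 2 + 2 = 3 + 1 by rfl, pow_succ, he, ← sq]
  rw [← he, pow_succ, hidem.eq_zero_of_isNilpotent (hn.pow_succ 1), zero_mul]

lemma eq_zero_of_pow_three_eq_self_of_mem_jacobson {R : Type*} [Ring R] {e : R}
    (he : e ^ 3 = e) (hJ : e ∈ jacobson (⊥ : Ideal R)) : e = 0 := by
  -- `1 - e²` has a left inverse `z`, and `1 - e²` annihilates `e`.
  obtain ⟨z, hz⟩ := mem_jacobson_iff.1 hJ (-e)
  rw [mem_bot] at hz
  calc e = z * (e - e ^ 3) - (z * -e * e + z - 1) * e := by noncomm_ring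
    _ = 0 := by rw [hz, he, sub_self, mul_zero, zero_mul, sub_zero]

lemma IsIdempotentElem.sub_pow_three_of_mul_eq_zero {R : Type*} [Ring R] {p q : R}
    (hp : IsIdempotentElem p) (hq : IsIdempotentElem q) (hpq : p * q = 0) (hqp : q * p = 0) :
    (p - q) ^ 3 = p - q := by
  have hsq : (p - q) ^ 2 = p + q := by
    rw [sq, sub_mul, mul_sub, mul_sub, hp.eq, hq.eq, hpq, hqp]; abel
  rw [pow_succ, hsq, add_mul, mul_sub, mul_sub, hp.eq, hq.eq, hpq, hqp]; abel

lemma exists_isIdempotentElem_sub_eq_of_pow_three_eq_self {S : Type*} [Ring S]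
    (h2 : IsUnit (2 : S)) {t : S} (ht : t ^ 3 = t) :
    ∃ p q : S, IsIdempotentElem p ∧ IsIdempotentElem q ∧ p * q = 0 ∧ q * p = 0 ∧ p - q = t := by
  let := h2.invertible
  have half_mul_half (x y : S) : ⅟2 * x * (⅟2 * y) = ⅟2 * (⅟2 * (x * y)) := by
    have hx : x * ⅟2 = ⅟2 * x :=
      (Commute.invOf_left (by rw [Commute, SemiconjBy, two_mul, mul_two])).eq.symm
    rw [mul_assoc, ← mul_assoc x, hx, mul_assoc]
  have half_idem {s : S} (hs : s * s = 2 * s) : IsIdempotentElem (⅟2 * s) := by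
    rw [IsIdempotentElem, half_mul_half, hs, invOf_mul_cancel_left]
  have ht4 : t ^ 4 = t ^ 2 := by rw [pow_succ, ht, sq]
  refine ⟨⅟2 * (t ^ 2 + t), ⅟2 * (t ^ 2 - t), half_idem ?_, half_idem ?_, ?_, ?_, ?_⟩
  · calc (t ^ 2 + t) * (t ^ 2 + t) = t ^ 4 + 2 * t ^ 3 + t ^ 2 := by noncomm_ring
      _ = 2 * (t ^ 2 + t) := by rw [ht4, ht]; noncomm_ring
  · calc (t ^ 2 - t) * (t ^ 2 - t) = t ^ 4 - 2 * t ^ 3 + t ^ 2 := by noncomm_ring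
      _ = 2 * (t ^ 2 - t) := by rw [ht4, ht]; noncomm_ring
  · rw [half_mul_half, show (t ^ 2 + t) * (t ^ 2 - t) = t ^ 4 - t ^ 2 by noncomm_ring, ht4,
      sub_self, mul_zero, mul_zero]
  · rw [half_mul_half, show (t ^ 2 - t) * (t ^ 2 + t) = t ^ 4 - t ^ 2 by noncomm_ring, ht4,
      sub_self, mul_zero, mul_zero]
  · rw [← mul_sub, show t ^ 2 + t - (t ^ 2 - t) = 2 * t by noncomm_ring, invOf_mul_cancel_left]

section NilKernel

variable {R S : Type*} [Ring R] [Ring S] (f : R →+* S)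
  (hker : ∀ x ∈ RingHom.ker f, IsNilpotent x)
include hker

lemma IsNilpotent.of_map_of_ker_isNilpotent {x : R} (hx : IsNilpotent (f x)) : IsNilpotent x := by
  obtain ⟨n, hn⟩ := hx
  obtain ⟨m, hm⟩ := hker (x ^ n) (by rw [RingHom.mem_ker, map_pow, hn])
  exact ⟨n * m, by rw [pow_mul, hm]⟩

lemma exists_pow_three_eq_self_map_eq_of_ker_isNilpotent (hf : Function.Surjective f)
    (h2 : IsUnit (2 : S)) {t : S} (ht : t ^ 3 = t) : ∃ t' : R, t' ^ 3 = t' ∧ f t' = t := by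
  obtain ⟨p, q, hp, hq, hpq, hqp, rfl⟩ := exists_isIdempotentElem_sub_eq_of_pow_three_eq_self h2 ht
  obtain ⟨Q, hQ, rfl⟩ := exists_isIdempotentElem_eq_of_ker_isNilpotent f hker q (hf q) hq
  obtain ⟨P, hP, rfl, hPQ, hQP⟩ :=
    exists_isIdempotentElem_mul_eq_zero_of_ker_isNilpotent f hker p (hf p) hp Q hQ hpq hqp
  exact ⟨P - Q, hP.sub_pow_three_of_mul_eq_zero hQ hPQ hQP, map_sub f P Q⟩

lemma TrinilClean.of_ker_isNilpotent (hf : Function.Surjective f) (h2 : IsUnit (2 : S))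
    (hS : TrinilClean S) : TrinilClean R := by
  intro a
  obtain ⟨ε, ω, hε, hω, ha⟩ := hS (f a)
  obtain ⟨e, he, rfl⟩ := exists_pow_three_eq_self_map_eq_of_ker_isNilpotent f hker hf h2 hε
  refine ⟨e, a - e, he, IsNilpotent.of_map_of_ker_isNilpotent f hker ?_, (add_sub_cancel e a).symm⟩
  rwa [map_sub, ha, add_sub_cancel_left]

end NilKernel

lemma TrinilClean.of_surjective {R S : Type*} [Ring R] [Ring S] (f : R →+* S)
    (hf : Function.Surjective f) (hR : TrinilClean R) : TrinilClean S := by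
  intro b
  obtain ⟨a, rfl⟩ := hf b
  obtain ⟨e, w, he, hw, rfl⟩ := hR a
  exact ⟨f e, f w, by rw [← map_pow, he], hw.map f, map_add f e w⟩

lemma TrinilClean.isNilpotent_of_mem_jacobson {R : Type*} [Ring R] (hR : TrinilClean R) {x : R}
    (hx : x ∈ jacobson (⊥ : Ideal R)) : IsNilpotent x := by
  obtain ⟨e, w, he, hw, rfl⟩ := hR x
  have heJ : e ∈ jacobson (⊥ : Ideal R) := by
    rw [← Ideal.Quotient.eq_zero_iff_mem] at hx ⊢
    rw [map_add, add_eq_zero_iff_eq_neg] at hx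
    exact eq_zero_of_pow_three_eq_self_of_isNilpotent (by rw [← map_pow, he])
      (hx ▸ (hw.map _).neg)
  rwa [eq_zero_of_pow_three_eq_self_of_mem_jacobson he heJ, zero_add]

lemma trinilClean_quotient_iff {R : Type*} [Ring R] (I : Ideal R) [I.IsTwoSided] :
    TrinilClean (R ⧸ I) ↔ ∀ a : R, ∃ e w : R,
      e ^ 3 - e ∈ I ∧ (∃ n : ℕ, w ^ n ∈ I) ∧ a - (e + w) ∈ I := by
  rw [TrinilClean, Ideal.Quotient.mk_surjective.forall]
  simp only [Ideal.Quotient.mk_surjective.exists, ← Ideal.Quotient.eq_zero_iff_mem, IsNilpotent,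
    map_sub, map_pow, map_add, sub_eq_zero]

/-- The first conjunct says that `R / J(R)` is trinil clean, stated on representatives in `R`. -/
theorem trinilClean_iff_quotient_jacobson (R : Type*) [Ring R]
    (h3 : (3 : R) ∈ Ideal.jacobson (⊥ : Ideal R)) :
    TrinilClean R ↔
      ((∀ a : R, ∃ e w : R,
          e ^ 3 - e ∈ Ideal.jacobson (⊥ : Ideal R) ∧
          (∃ n : ℕ, w ^ n ∈ Ideal.jacobson (⊥ : Ideal R)) ∧
          a - (e + w) ∈ Ideal.jacobson (⊥ : Ideal R)) ∧
        ∀ x ∈ Ideal.jacobson (⊥ : Ideal R), IsNilpotent x) := by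
  rw [← trinilClean_quotient_iff]
  refine ⟨fun hR ↦ ⟨hR.of_surjective _ Ideal.Quotient.mk_surjective,
    fun _ ↦ hR.isNilpotent_of_mem_jacobson⟩, fun ⟨hQ, hJ⟩ ↦ ?_⟩
  have h4 : (2 : R ⧸ jacobson (⊥ : Ideal R)) * 2 = 1 := by
    rw [show (2 : R ⧸ jacobson (⊥ : Ideal R)) * 2 = 1 + 3 by norm_num,
      ← map_ofNat (Ideal.Quotient.mk _) 3, Ideal.Quotient.eq_zero_iff_mem.2 h3, add_zero]
  exact hQ.of_ker_isNilpotent _ (by rw [Ideal.mk_ker]; exact hJ) Ideal.Quotient.mk_surjective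
    ⟨⟨2, 2, h4, h4⟩, rfl⟩
end

section
/- Let R be a ring in which any two nilpotent elements commute (a*b = b*a for all nilpotent a, b ∈ R). Then R is strongly 2-nil-clean if and only if R is trinil clean. -/
/-- A ring is *strongly 2-nil-clean* if every element is the sum of a tripotent
(`e ^ 3 = e`) and a nilpotent that commute. -/
def Strongly2NilClean (R : Type*) [Ring R] : Prop :=
  ∀ a : R, ∃ e w : R, e ^ 3 = e ∧ IsNilpotent w ∧ e * w = w * e ∧ a = e + w

theorem isNilpotent_mul_comm {M : Type*} [MonoidWithZero M] {a b : M} :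
    IsNilpotent (a * b) ↔ IsNilpotent (b * a) := by
  suffices ∀ a b : M, IsNilpotent (a * b) → IsNilpotent (b * a) from ⟨this a b, this b a⟩
  rintro a b ⟨n, hn⟩
  exact ⟨n + 1, by rw [pow_succ, ← mul_assoc, mul_pow_mul, hn, mul_zero, zero_mul]⟩

def NilpotentsCommute (R : Type*) [Ring R] : Prop :=
  ∀ a b : R, IsNilpotent a → IsNilpotent b → Commute a b

namespace NilpotentsCommute

variable {R : Type*} [Ring R] {a b e g r : R}

theorem isNilpotent_add (h : NilpotentsCommute R) (ha : IsNilpotent a) (hb : IsNilpotent b) :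
    IsNilpotent (a + b) :=
  (h a b ha hb).isNilpotent_add ha hb

theorem isNilpotent_sub (h : NilpotentsCommute R) (ha : IsNilpotent a) (hb : IsNilpotent b) :
    IsNilpotent (a - b) :=
  (h a b ha hb).isNilpotent_sub ha hb

theorem isNilpotent_mul_of_isIdempotentElem (h : NilpotentsCommute R) (hg : IsIdempotentElem g)
    (hr : IsNilpotent r) : IsNilpotent (g * r) := by
  have hg₁ : g * (1 - g) = 0 := by rw [mul_sub, mul_one, hg.eq, sub_self]
  have h₁g : (1 - g) * g = 0 := by rw [sub_mul, one_mul, hg.eq, sub_self]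
  -- `r` minus its two square-zero off-diagonal Peirce components commutes with `g`
  have hx : IsNilpotent (g * r * (1 - g)) :=
    ⟨2, by rw [sq, show g * r * (1 - g) * (g * r * (1 - g)) = g * r * ((1 - g) * g) * r * (1 - g)
      by noncomm_ring, h₁g]; simp⟩
  have hy : IsNilpotent ((1 - g) * r * g) :=
    ⟨2, by rw [sq, show (1 - g) * r * g * ((1 - g) * r * g) = (1 - g) * r * (g * (1 - g)) * r * g
      by noncomm_ring, hg₁]; simp⟩
  have hz : IsNilpotent (g * r * g + (1 - g) * r * (1 - g)) := by
    rw [show g * r * g + (1 - g) * r * (1 - g) = r - g * r * (1 - g) - (1 - g) * r * g by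
      noncomm_ring]
    exact h.isNilpotent_sub (h.isNilpotent_sub hr hx) hy
  have hgz : g * (g * r * g + (1 - g) * r * (1 - g)) = g * r * g := by
    rw [show g * (g * r * g + (1 - g) * r * (1 - g)) = (g * g) * r * g + (g * (1 - g)) * r * (1 - g)
      by noncomm_ring, hg.eq, hg₁]
    simp
  have hzg : (g * r * g + (1 - g) * r * (1 - g)) * g = g * r * g := by
    rw [show (g * r * g + (1 - g) * r * (1 - g)) * g = g * r * (g * g) + (1 - g) * r * ((1 - g) * g)
      by noncomm_ring, hg.eq, h₁g]
    simp
  have hgrg : IsNilpotent (g * r * g) :=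
    hgz ▸ Commute.isNilpotent_mul_left (hgz.trans hzg.symm) hz
  rw [show g * r = g * r * g + g * r * (1 - g) by noncomm_ring]
  exact h.isNilpotent_add hgrg hx

theorem isNilpotent_mul_of_pow_three_eq_self (h : NilpotentsCommute R) (he : e ^ 3 = e)
    (hr : IsNilpotent r) : IsNilpotent (e * r) := by
  have hge : e * e * e = e := (by noncomm_ring : e * e * e = e ^ 3).trans he
  have heg : e * (e * e) = e := by rw [← mul_assoc, hge]
  have hg : IsIdempotentElem (e * e) := by
    rw [IsIdempotentElem, ← mul_assoc, hge]
  set g := e * e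
  have hgr : IsNilpotent (g * r) := h.isNilpotent_mul_of_isIdempotentElem hg hr
  have hgrg : IsNilpotent (g * r * g) := isNilpotent_mul_comm.mp (by rwa [← mul_assoc, hg.eq])
  have here : IsNilpotent (e * r * e) := by
    rw [mul_assoc]
    exact isNilpotent_mul_comm.mpr (by rw [mul_assoc]; exact isNilpotent_mul_comm.mp hgr)
  -- `e` is an involution of the corner ring `gRg`
  have hgre : IsNilpotent (g * (r * e)) := by
    refine IsNilpotent.of_pow (m := 2) ?_
    rw [sq, show g * (r * e) * (g * (r * e)) = g * r * (e * g) * r * e by noncomm_ring, heg,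
      show g * r * e * r * e = g * r * g * (e * r * e) by
        rw [show g * r * g * (e * r * e) = g * r * (g * e) * r * e by noncomm_ring, hge]]
    exact (h _ _ hgrg here).isNilpotent_mul_left here
  have hre : IsNilpotent (r * e) := by
    simpa only [mul_assoc, heg] using isNilpotent_mul_comm.mp hgre
  exact isNilpotent_mul_comm.mp hre

theorem isNilpotent_mul_left_of_trinilClean (h : NilpotentsCommute R) (htri : TrinilClean R)
    (x : R) (hr : IsNilpotent r) : IsNilpotent (x * r) := by
  obtain ⟨e, w, he, hw, rfl⟩ := htri x
  rw [add_mul]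
  exact h.isNilpotent_add (h.isNilpotent_mul_of_pow_three_eq_self he hr)
    ((h w r hw hr).isNilpotent_mul_left hr)

theorem isNilpotent_mul_right_of_trinilClean (h : NilpotentsCommute R) (htri : TrinilClean R)
    (x : R) (hr : IsNilpotent r) : IsNilpotent (r * x) :=
  isNilpotent_mul_comm.mp (h.isNilpotent_mul_left_of_trinilClean htri x hr)

theorem isNilpotent_pow_three_sub_self (h : NilpotentsCommute R) (htri : TrinilClean R) (a : R) :
    IsNilpotent (a ^ 3 - a) := by
  obtain ⟨e, w, he, hw, ha⟩ := htri a
  have key : a ^ 3 - a = w * (a * a) + e * (w * a) + e * e * w - w + (e ^ 3 - e) := by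
    rw [ha]; noncomm_ring
  rw [key, he, sub_self, add_zero]
  refine h.isNilpotent_sub (h.isNilpotent_add (h.isNilpotent_add ?_ ?_) ?_) hw
  · exact h.isNilpotent_mul_right_of_trinilClean htri _ hw
  · exact h.isNilpotent_mul_left_of_trinilClean htri e
      (h.isNilpotent_mul_right_of_trinilClean htri a hw)
  · exact h.isNilpotent_mul_left_of_trinilClean htri _ hw

theorem isNilpotent_six (h : NilpotentsCommute R) (htri : TrinilClean R) : IsNilpotent (6 : R) := by
  simpa only [show (2 : R) ^ 3 - 2 = 6 by norm_num] using h.isNilpotent_pow_three_sub_self htri 2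

end NilpotentsCommute

section CommRing

variable {A : Type*} [CommRing A]

theorem exists_add_eq_one_mul_eq_zero_of_isNilpotent_six (h6 : IsNilpotent (6 : A)) :
    ∃ p q : A, p + q = 1 ∧ p * q = 0 ∧ IsNilpotent (2 * p) ∧ IsNilpotent (3 * q) := by
  obtain ⟨k, hk⟩ := id h6
  rw [show (6 : A) = 2 * 3 by norm_num, mul_pow] at hk
  obtain ⟨u, v, huv⟩ : IsCoprime ((2 : ℤ) ^ (k + 1)) (3 ^ (k + 1)) :=
    (Int.isCoprime_iff_gcd_eq_one.mpr rfl).pow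
  have huv' := congrArg (Int.cast : ℤ → A) huv
  push_cast at huv'
  refine ⟨v * 3 ^ (k + 1), u * 2 ^ (k + 1), ?_, ?_, ?_, ?_⟩
  · linear_combination huv'
  · linear_combination ((u : A) * v * 6) * hk
  · rw [show 2 * ((v : A) * 3 ^ (k + 1)) = (v * 3 ^ k) * 6 by ring]
    exact (Commute.all _ _).isNilpotent_mul_left h6
  · rw [show 3 * ((u : A) * 2 ^ (k + 1)) = (u * 2 ^ k) * 6 by ring]
    exact (Commute.all _ _).isNilpotent_mul_left h6

open Polynomial in
theorem exists_pow_three_eq_self_isNilpotent_sub (h6 : IsNilpotent (6 : A)) {a : A}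
    (ha : IsNilpotent (a ^ 3 - a)) : ∃ e : A, e ^ 3 = e ∧ IsNilpotent (a - e) := by
  obtain ⟨p, q, hpq, hpq0, h2p, h3q⟩ := exists_add_eq_one_mul_eq_zero_of_isNilpotent_six h6
  -- Newton's method needs `P'(a)` to be a unit, which fails for `X³ - X` on the `2`-part
  set P : A[X] := C p * (X ^ 2 - X) + C q * (X ^ 3 - X)
  have hP : ∀ x : A, aeval x P = p * (x ^ 2 - x) + q * (x ^ 3 - x) := fun x ↦ by simp [P]
  have hP' : aeval a (derivative P) = 2 * p * a + 3 * q * a ^ 2 - 1 := by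
    simp only [P, derivative_mul, derivative_C, derivative_X_pow, derivative_X, map_add, map_sub,
      map_mul, map_natCast, aeval_C, aeval_X_pow, map_one, zero_mul, zero_add,
      Algebra.algebraMap_self, RingHom.id_apply]
    linear_combination (-1 : A) * hpq
  have hunit : IsUnit (aeval a (derivative P)) := by
    rw [hP']
    exact ((Commute.all _ _).isNilpotent_add ((Commute.all _ _).isNilpotent_mul_right h2p)
      ((Commute.all _ _).isNilpotent_mul_right h3q)).isUnit_sub_one
  have hnil : IsNilpotent (aeval a P) := by
    rw [hP]
    refine (Commute.all _ _).isNilpotent_add (IsNilpotent.of_pow (m := 2) ?_)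
      ((Commute.all _ _).isNilpotent_mul_left ha)
    rw [show (p * (a ^ 2 - a)) ^ 2 = p * p * a * (a ^ 3 - a) - 2 * p * (p * (a ^ 3 - a ^ 2)) by
      ring]
    exact (Commute.all _ _).isNilpotent_sub ((Commute.all _ _).isNilpotent_mul_left ha)
      ((Commute.all _ _).isNilpotent_mul_right h2p)
  obtain ⟨r, ⟨hr, hPr⟩, -⟩ := existsUnique_nilpotent_sub_and_aeval_eq_zero hnil hunit
  rw [hP] at hPr
  refine ⟨r, ?_, hr⟩
  -- as `pq = 0`, the root condition splits into `p (r² - r) = 0` and `q (r³ - r) = 0`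
  linear_combination (p * (r + 1) + q) * hPr
    - ((r + 1) * (r ^ 3 - r) + (r ^ 2 - r) - 2 * (r ^ 3 - r)) * hpq0
    - (p + q + 1) * (r ^ 3 - r) * hpq

end CommRing

open scoped IsMulCommutative in
theorem exists_pow_three_eq_self_commute_isNilpotent_sub {R : Type*} [Ring R]
    (h6 : IsNilpotent (6 : R)) {a : R} (ha : IsNilpotent (a ^ 3 - a)) :
    ∃ e : R, e ^ 3 = e ∧ Commute e a ∧ IsNilpotent (a - e) := by
  have := Algebra.isMulCommutative_adjoin ℤ (s := {a}) (by simp)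
  let a' : Algebra.adjoin ℤ {a} := ⟨a, Algebra.self_mem_adjoin_singleton ℤ a⟩
  have hinj : Function.Injective (Algebra.adjoin ℤ {a}).val := Subtype.val_injective
  obtain ⟨e, he, hae⟩ := exists_pow_three_eq_self_isNilpotent_sub (a := a')
    ((IsNilpotent.map_iff hinj).mp (by rwa [map_ofNat]))
    ((IsNilpotent.map_iff hinj).mp (by rwa [map_sub, map_pow]))
  exact ⟨e, congrArg Subtype.val he, congrArg Subtype.val (mul_comm e a'),
    hae.map (Algebra.adjoin ℤ {a}).val⟩

theorem strongly2NilClean_iff_trinilClean_of_nilpotents_commute (R : Type*) [Ring R]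
    (hcomm : ∀ a b : R, IsNilpotent a → IsNilpotent b → a * b = b * a) :
    Strongly2NilClean R ↔ TrinilClean R := by
  refine ⟨fun h a ↦ ?_, fun htri a ↦ ?_⟩
  · obtain ⟨e, w, he, hw, -, ha⟩ := h a
    exact ⟨e, w, he, hw, ha⟩
  · have h : NilpotentsCommute R := hcomm
    obtain ⟨e, he, hea, hae⟩ := exists_pow_three_eq_self_commute_isNilpotent_sub
      (h.isNilpotent_six htri) (h.isNilpotent_pow_three_sub_self htri a)
    exact ⟨e, a - e, he, hae, (hea.sub_right (Commute.refl e)).eq, (add_sub_cancel e a).symm⟩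
end

section
/- Let R be a von Neumann regular ring and let n ≥ 2. Then x^3 = x for every x ∈ R if and only if R is commutative and the matrix ring M_n(R) is trinil clean. -/
open Matrix Module

def IsTrinilClean {A : Type*} [Ring A] (a : A) : Prop :=
  ∃ e w : A, e ^ 3 = e ∧ IsNilpotent w ∧ a = e + w

section Basic

variable {A B : Type*} [Ring A] [Ring B]

theorem IsTrinilClean.map {a : A} (h : IsTrinilClean a) (f : A →+* B) :
    IsTrinilClean (f a) := by
  obtain ⟨e, w, he, hw, rfl⟩ := h
  exact ⟨f e, f w, by rw [← map_pow, he], hw.map f, map_add f e w⟩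

theorem TrinilClean.of_surjective_s14 (h : TrinilClean A) (f : A →+* B)
    (hf : Function.Surjective f) : TrinilClean B := by
  intro b
  obtain ⟨a, rfl⟩ := hf b
  exact IsTrinilClean.map (h a) f

theorem Pi.isNilpotent_of_forall_isNilpotent {ι : Type*} [Finite ι] {R : ι → Type*}
    [∀ i, MonoidWithZero (R i)] {x : ∀ i, R i} (h : ∀ i, IsNilpotent (x i)) :
    IsNilpotent x := by
  cases nonempty_fintype ι
  choose k hk using h
  refine ⟨∑ i, k i, funext fun i => ?_⟩
  exact pow_eq_zero_of_le (Finset.single_le_sum (fun _ _ => Nat.zero_le _) (Finset.mem_univ i))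
    (hk i)

theorem TrinilClean.pi {ι : Type*} [Finite ι] {R : ι → Type*} [∀ i, Ring (R i)]
    (h : ∀ i, TrinilClean (R i)) : TrinilClean (∀ i, R i) := by
  intro a
  choose e w he hw ha using fun i => h i (a i)
  exact ⟨e, w, funext he, Pi.isNilpotent_of_forall_isNilpotent hw, funext ha⟩

end Basic

section Commutativity

variable {R : Type*} [Ring R]

theorem IsIdempotentElem.commute_of_isReduced [IsReduced R] {e : R} (he : IsIdempotentElem e)
    (y : R) : Commute e y := by
  have hl : e * y * (1 - e) = 0 := by
    refine IsReduced.eq_zero _ ⟨2, ?_⟩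
    have : (1 - e) * e = 0 := by rw [sub_mul, one_mul, he.eq, sub_self]
    calc (e * y * (1 - e)) ^ 2 = e * y * ((1 - e) * e) * y * (1 - e) := by noncomm_ring
      _ = 0 := by rw [this]; noncomm_ring
  have hr : (1 - e) * y * e = 0 := by
    refine IsReduced.eq_zero _ ⟨2, ?_⟩
    have : e * (1 - e) = 0 := by rw [mul_sub, mul_one, he.eq, sub_self]
    calc ((1 - e) * y * e) ^ 2 = (1 - e) * y * (e * (1 - e)) * y * e := by noncomm_ring
      _ = 0 := by rw [this]; noncomm_ring
  rw [Commute, SemiconjBy, ← sub_eq_zero]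
  calc e * y - y * e = e * y * (1 - e) - (1 - e) * y * e := by noncomm_ring
    _ = 0 := by rw [hl, hr, sub_zero]

theorem isReduced_of_pow_three_eq_self (hR : ∀ x : R, x ^ 3 = x) : IsReduced R :=
  (isReduced_iff_pow_one_lt 2 one_lt_two).mpr fun x hx => by
    rw [← hR x, pow_succ, hx, zero_mul]

theorem mul_comm_of_pow_three_eq_self (hR : ∀ x : R, x ^ 3 = x) (a b : R) : a * b = b * a := by
  have := isReduced_of_pow_three_eq_self hR
  have h4 : ∀ x : R, x ^ 2 * x ^ 2 = x ^ 2 := fun x => by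
    rw [show x ^ 2 * x ^ 2 = x ^ 3 * x by noncomm_ring, hR, sq]
  have hsq : ∀ x : R, Commute (x ^ 2) b := fun x =>
    IsIdempotentElem.commute_of_isReduced (h4 x) b
  have h6 : ∀ x : R, 6 * x = 0 := fun x => by
    have h := hR (2 * x)
    rw [show (2 * x) ^ 3 = 8 * x ^ 3 by noncomm_ring, hR] at h
    rw [show (6 : R) * x = 8 * x - 2 * x by noncomm_ring, h, sub_self]
  have h2 : Commute (2 * a) b := by
    have : 2 * a = (a + a ^ 2) ^ 2 - a ^ 2 - a ^ 2 := by
      rw [show (a + a ^ 2) ^ 2 = a ^ 2 + a ^ 3 + a ^ 3 + a ^ 2 * a ^ 2 by noncomm_ring, h4, hR]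
      noncomm_ring
    rw [this]
    exact ((hsq _).sub_left (hsq a)).sub_left (hsq a)
  have h3 : Commute (3 * a) b := by
    have : 3 * a = 3 * a ^ 2 := by
      rw [← sub_eq_zero]
      refine IsReduced.eq_zero _ ⟨2, ?_⟩
      calc (3 * a - 3 * a ^ 2) ^ 2 = 9 * a ^ 2 - 18 * a ^ 3 + 9 * (a ^ 2 * a ^ 2) := by
            noncomm_ring
        _ = 3 * (6 * a ^ 2) - 3 * (6 * a) := by rw [h4, hR]; noncomm_ring
        _ = 0 := by rw [h6, h6, mul_zero, sub_zero]
    rw [this]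
    exact (Commute.ofNat_left 3 b).mul_left (hsq a)
  have := (h3.sub_left h2).eq
  rwa [← sub_mul, show (3 : R) - 2 = 1 by norm_num, one_mul] at this

end Commutativity

section Converse

variable {R : Type*} [Ring R]

theorem isReduced_of_regular_of_comm (hreg : ∀ a : R, ∃ x : R, a = a * x * a)
    (hcomm : ∀ a b : R, a * b = b * a) : IsReduced R :=
  (isReduced_iff_pow_one_lt 2 one_lt_two).mpr fun y hy => by
    obtain ⟨x, hx⟩ := hreg y
    rwa [hcomm y x, mul_assoc, ← sq, hy, mul_zero] at hx

theorem isNilpotent_pow_three_sub_self {e w : R} (he : e ^ 3 = e) (hw : IsNilpotent w)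
    (hew : Commute e w) : IsNilpotent ((e + w) ^ 3 - (e + w)) := by
  set G := ∑ i ∈ Finset.range 3, (e + w) ^ i * e ^ (3 - 1 - i)
  have hG : Commute G w := Commute.sum_left _ _ _ fun i _ =>
    ((hew.add_left (Commute.refl w)).pow_left i).mul_left (hew.pow_left _)
  have hcube : (e + w) ^ 3 - e = G * w := by
    have := ((Commute.refl e).add_left hew.symm).geom_sum₂_mul 3
    rw [add_sub_cancel_left, he] at this
    exact this.symm
  rw [← sub_sub, hcube]
  exact (hG.mul_left (Commute.refl w)).isNilpotent_sub (hG.isNilpotent_mul_left hw) hw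

theorem pow_three_eq_self_of_trinilClean_matrix (hreg : ∀ a : R, ∃ x : R, a = a * x * a)
    (hcomm : ∀ a b : R, a * b = b * a) {ι : Type*} [Fintype ι] [DecidableEq ι] [Nonempty ι]
    (h : TrinilClean (Matrix ι ι R)) (x : R) : x ^ 3 = x := by
  have := isReduced_of_regular_of_comm hreg hcomm
  obtain ⟨e, w, he, hw, hx⟩ := h (scalar ι x)
  have hew : Commute e w := by
    rw [eq_sub_of_add_eq hx.symm]
    exact (scalar_commute x (hcomm x) w).sub_left (Commute.refl w)
  have hnil := isNilpotent_pow_three_sub_self he hw hew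
  rw [← hx, ← map_pow, ← map_sub, IsNilpotent.map_iff fun _ _ => scalar_inj.mp] at hnil
  exact sub_eq_zero.mp hnil.eq_zero

end Converse

section Field

variable {F : Type*} [Field F]

open Polynomial in
theorem Matrix.isNilpotent_of_strictlyLowerTriangular {ι R : Type*} [Fintype ι] [LinearOrder ι]
    [DecidableEq ι] [CommRing R] {M : Matrix ι ι R} (hM : ∀ i j, i ≤ j → M i j = 0) :
    IsNilpotent M := by
  have hlower : M.charmatrix.IsLowerTriangular :=
    charmatrix_blockTriangular_iff.mpr fun i j hij => hM i j (le_of_lt hij)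
  have hχ : M.charpoly = X ^ Fintype.card ι := by
    simp [charpoly, det_of_isLowerTriangular _ hlower, charmatrix_apply_eq, hM _ _ le_rfl]
  exact ⟨_, by simpa [hχ] using M.aeval_self_charpoly⟩

theorem Matrix.isTrinilClean_add_vecMulVec_single {ι : Type*} [Fintype ι] [LinearOrder ι]
    [DecidableEq ι] (hF : ∀ x : F, x ^ 3 = x) {L : Matrix ι ι F}
    (hL : ∀ i j, i ≤ j → L i j = 0) (c : ι → F) {l : ι} (hl : ∀ i, i ≤ l) :
    IsTrinilClean (L + vecMulVec c (Pi.single l 1)) := by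
  have hsq : ∀ {x : F}, x ≠ 0 → x * x = 1 := fun {x} hx =>
    mul_left_cancel₀ hx (by rw [mul_one, ← mul_assoc, ← pow_three', hF])
  set u : ι → F := Pi.single l 1
  by_cases hcl : c l = 0
  · by_cases hc : c = 0
    · exact ⟨0, L, by simp, isNilpotent_of_strictlyLowerTriangular hL, by simp [hc]⟩
    -- Here `vecMulVec c u` squares to zero; adding `vecMulVec u q` makes it tripotent, and
    -- `vecMulVec u q` has its only entry at `(l, j)`, below the diagonal.
    obtain ⟨j, hj⟩ := Function.ne_iff.mp hc
    have hjl : j < l := lt_of_le_of_ne (hl j) (by rintro rfl; exact hj hcl)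
    set q : ι → F := Pi.single j (c j)
    have huc : u ⬝ᵥ c = 0 := by simp [u, hcl]
    have huu : u ⬝ᵥ u = 1 := by simp [u]
    have hqc : q ⬝ᵥ c = 1 := by simp [q, hsq hj]
    have hqu : q ⬝ᵥ u = 0 := by simp [q, u, hjl.ne]
    refine ⟨vecMulVec c u + vecMulVec u q, L - vecMulVec u q, ?_, ?_, by abel⟩
    · simp [pow_three, add_mul, mul_add, vecMulVec_mul_vecMulVec, huc, huu, hqc, hqu]
    · refine isNilpotent_of_strictlyLowerTriangular fun i k hik => ?_
      simp only [Matrix.sub_apply, hL i k hik, vecMulVec_apply, u, q, Pi.single_apply]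
      split_ifs with hi hk
      · exact absurd (hi ▸ hk ▸ hik) (not_le.mpr hjl)
      all_goals simp
  · refine ⟨vecMulVec c u, L, ?_, isNilpotent_of_strictlyLowerTriangular hL, by abel⟩
    have huc : u ⬝ᵥ c = c l := by simp [u]
    simp [pow_three, vecMulVec_mul_vecMulVec, huc, smul_smul, hsq hcl]

theorem Module.End.isNilpotent_of_restrict_of_mapQ {R M : Type*} [Ring R] [AddCommGroup M]
    [Module R M] {w : End R M} {K : Submodule R M} (hK : K ≤ K.comap w)
    (h₁ : IsNilpotent (w.restrict hK)) (h₂ : IsNilpotent (K.mapQ K w hK)) : IsNilpotent w := by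
  obtain ⟨a, ha⟩ := h₁
  obtain ⟨b, hb⟩ := h₂
  refine ⟨a + b, LinearMap.ext fun v => ?_⟩
  have hv : (w ^ b) v ∈ K := by
    have := LinearMap.congr_fun hb (K.mkQ v)
    rwa [← Submodule.mapQ_pow, Submodule.mkQ_apply, Submodule.mapQ_apply, LinearMap.zero_apply,
      Submodule.Quotient.mk_eq_zero] at this
  rw [Module.End.pow_restrict] at ha
  rw [pow_add, Module.End.mul_apply]
  exact congrArg Subtype.val (LinearMap.congr_fun ha ⟨_, hv⟩)

theorem Submodule.exists_ringHom_restrict_mapQ {D V : Type*} [DivisionRing D] [AddCommGroup V]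
    [Module D V] (K : Submodule D V) :
    ∃ Φ : End D K × End D (V ⧸ K) →+* End D V,
      ∀ g, (∀ x : K, Φ g x = g.1 x) ∧ ∀ v, K.mkQ (Φ g v) = g.2 (K.mkQ v) := by
  obtain ⟨K', hK'⟩ := K.exists_isCompl
  let φ : (K × (V ⧸ K)) ≃ₗ[D] V :=
    (LinearEquiv.refl D K).prodCongr (K.quotientEquivOfIsCompl K' hK') ≪≫ₗ
      K.prodEquivOfIsCompl K' hK'
  have hφ₁ : ∀ x : K, φ (x, 0) = x := fun x => by simp [φ]
  have hφ₂ : ∀ p, K.mkQ (φ p) = p.2 := fun p => by simp [φ]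
  refine ⟨(LinearEquiv.conjRingEquiv φ).toRingHom.comp (LinearMap.prodMapRingHom D K (V ⧸ K)),
    fun g => ⟨fun x => ?_, fun v => ?_⟩⟩
  · have : φ.symm x = (x, 0) := φ.symm_apply_eq.mpr (hφ₁ x).symm
    simp [LinearEquiv.conjRingEquiv, LinearEquiv.arrowCongrAddEquiv, this, hφ₁]
  · have : (φ.symm v).2 = K.mkQ v := by rw [← hφ₂, φ.apply_symm_apply]
    simp [LinearEquiv.conjRingEquiv, LinearEquiv.arrowCongrAddEquiv, this, hφ₂]

theorem Module.End.isTrinilClean_of_restrict_of_mapQ {D V : Type*} [DivisionRing D]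
    [AddCommGroup V] [Module D V] {f : End D V} {K : Submodule D V} (hK : K ≤ K.comap f)
    (h₁ : IsTrinilClean (f.restrict hK)) (h₂ : IsTrinilClean (K.mapQ K f hK)) :
    IsTrinilClean f := by
  obtain ⟨e₁, w₁, he₁, hw₁, hf₁⟩ := h₁
  obtain ⟨e₂, w₂, he₂, hw₂, hf₂⟩ := h₂
  obtain ⟨Φ, hΦ⟩ := K.exists_ringHom_restrict_mapQ
  obtain ⟨heK, heQ⟩ := hΦ (e₁, e₂)
  have hfK : ∀ x : K, f x = e₁ x + w₁ x := fun x => by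
    simpa using congrArg Subtype.val (LinearMap.congr_fun hf₁ x)
  have hfQ : ∀ v, K.mkQ (f v) = e₂ (K.mkQ v) + w₂ (K.mkQ v) := fun v => by
    simpa using LinearMap.congr_fun hf₂ (K.mkQ v)
  have hwK : K ≤ K.comap (f - Φ (e₁, e₂)) := fun x hx => by
    simp [heK ⟨x, hx⟩, hfK ⟨x, hx⟩]
  refine ⟨Φ (e₁, e₂), f - Φ (e₁, e₂), by rw [← map_pow, Prod.pow_mk, he₁, he₂], ?_, by abel⟩
  refine isNilpotent_of_restrict_of_mapQ hwK ?_ ?_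
  · have : (f - Φ (e₁, e₂)).restrict hwK = w₁ := by
      ext x
      simp [heK, hfK]
    rwa [this]
  · have : K.mapQ K (f - Φ (e₁, e₂)) hwK = w₂ := by
      ext v
      have hv := heQ v
      simp only [Submodule.mkQ_apply] at hv hfQ
      simp [hv, hfQ]
    rwa [this]

theorem Module.End.exists_linearIndependent_pow_apply {D V : Type*} [DivisionRing D]
    [AddCommGroup V] [Module D V] [FiniteDimensional D V] (f : End D V) {v : V} (hv : v ≠ 0) :
    ∃ m : ℕ, LinearIndependent D (fun i : Fin (m + 1) => (f ^ (i : ℕ)) v) ∧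
      (f ^ (m + 1)) v ∈ Submodule.span D (Set.range fun i : Fin (m + 1) => (f ^ (i : ℕ)) v) := by
  classical
  let P : ℕ → Prop := fun k => LinearIndependent D (fun i : Fin k => (f ^ (i : ℕ)) v)
  have hP₁ : P 1 := linearIndependent_unique_iff.mpr (by simpa using hv)
  have hPle : ∀ k, P k → k ≤ finrank D V := fun k hk => by
    simpa using hk.fintype_card_le_finrank
  have hpos : 1 ≤ finrank D V := hPle 1 hP₁
  set d := Nat.findGreatest P (finrank D V)
  have hd : P d := Nat.findGreatest_spec hpos hP₁
  have hnext : ¬ P (d + 1) := fun h =>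
    Nat.findGreatest_is_greatest (Nat.lt_succ_self d) (hPle _ h) h
  obtain ⟨m, hm⟩ : ∃ m, d = m + 1 :=
    ⟨d - 1, by have := Nat.le_findGreatest hpos hP₁; omega⟩
  rw [hm] at hd hnext
  refine ⟨m, hd, ?_⟩
  by_contra hmem
  exact hnext (linearIndependent_finSucc'.mpr ⟨hd, hmem⟩)

theorem Module.End.span_pow_apply_le_comap {R M : Type*} [Semiring R] [AddCommMonoid M]
    [Module R M] (f : End R M) {v : M} {m : ℕ}
    (hmem : (f ^ (m + 1)) v ∈ Submodule.span R (Set.range fun i : Fin (m + 1) => (f ^ (i : ℕ)) v)) :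
    Submodule.span R (Set.range fun i : Fin (m + 1) => (f ^ (i : ℕ)) v) ≤
      (Submodule.span R (Set.range fun i : Fin (m + 1) => (f ^ (i : ℕ)) v)).comap f := by
  refine Submodule.span_le.mpr (Set.range_subset_iff.mpr fun i => ?_)
  induction i using Fin.lastCases with
  | last => simpa [← Module.End.mul_apply, ← pow_succ'] using hmem
  | cast j =>
    have : f ((f ^ (j.castSucc : ℕ)) v) = (f ^ (j.succ : ℕ)) v := by
      simp [← Module.End.mul_apply, ← pow_succ']
    show f ((f ^ (j.castSucc : ℕ)) v) ∈ Submodule.span R _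
    rw [this]
    exact Submodule.subset_span ⟨j.succ, rfl⟩

theorem Module.End.exists_isTrinilClean_restrict (hF : ∀ x : F, x ^ 3 = x) {V : Type*}
    [AddCommGroup V] [Module F V] [FiniteDimensional F V] (f : End F V) {v : V} (hv : v ≠ 0) :
    ∃ (K : Submodule F V) (hK : K ≤ K.comap f), K ≠ ⊥ ∧ IsTrinilClean (f.restrict hK) := by
  obtain ⟨m, hli, hmem⟩ := f.exists_linearIndependent_pow_apply hv
  set g := fun i : Fin (m + 1) => (f ^ (i : ℕ)) v
  set K := Submodule.span F (Set.range g)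
  have hK : K ≤ K.comap f := f.span_pow_apply_le_comap hmem
  refine ⟨K, hK, (Submodule.ne_bot_iff K).mpr ⟨v, Submodule.subset_span ⟨0, by simp [g]⟩, hv⟩, ?_⟩
  let b := Basis.span hli
  let c := b.repr ⟨_, hmem⟩
  let L : Matrix (Fin (m + 1)) (Fin (m + 1)) F := of fun i j => if (i : ℕ) = j + 1 then 1 else 0
  have hL : ∀ i j, i ≤ j → L i j = 0 := fun i j hij => if_neg (by omega)
  have hmat : LinearMap.toMatrixAlgEquiv b (f.restrict hK) =
      L + vecMulVec c (Pi.single (Fin.last m) 1) := by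
    ext i j
    rw [LinearMap.toMatrixAlgEquiv_apply]
    induction j using Fin.lastCases with
    | last =>
      have : f.restrict hK (b (Fin.last m)) = ⟨_, hmem⟩ :=
        Subtype.ext (by simp [b, g, ← Module.End.mul_apply, ← pow_succ'])
      have hi : (i : ℕ) ≠ m + 1 := by omega
      simp [this, c, L, vecMulVec_apply, hi]
    | cast j =>
      have : f.restrict hK (b j.castSucc) = b j.succ :=
        Subtype.ext (by simp [b, g, ← Module.End.mul_apply, ← pow_succ'])
      simp [this, L, vecMulVec_apply, Finsupp.single_apply, Fin.ext_iff, @eq_comm ℕ (j + 1),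
        j.isLt.ne]
  have := (isTrinilClean_add_vecMulVec_single hF hL c Fin.le_last).map
    (LinearMap.toMatrixAlgEquiv b).symm.toRingEquiv.toRingHom
  rw [← hmat] at this
  simpa using this

theorem Module.End.trinilClean (hF : ∀ x : F, x ^ 3 = x) (V : Type*) [AddCommGroup V]
    [Module F V] [FiniteDimensional F V] : TrinilClean (End F V) := by
  induction h : finrank F V using Nat.strong_induction_on generalizing V with
  | _ n IH =>
  intro f
  rcases subsingleton_or_nontrivial V with _ | _
  · exact ⟨0, f, by simp, ⟨1, Subsingleton.elim _ _⟩, by simp⟩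
  obtain ⟨v, hv⟩ := exists_ne (0 : V)
  obtain ⟨K, hK, hK0, hres⟩ := f.exists_isTrinilClean_restrict hF hv
  refine isTrinilClean_of_restrict_of_mapQ hK hres (IH _ ?_ (V ⧸ K) rfl _)
  have := K.finrank_quotient_add_finrank
  have := Submodule.one_le_finrank_iff.mpr hK0
  omega

theorem Matrix.trinilClean_of_field (hF : ∀ x : F, x ^ 3 = x) (ι : Type*) [Fintype ι]
    [DecidableEq ι] : TrinilClean (Matrix ι ι F) :=
  (Module.End.trinilClean hF (ι → F)).of_surjective_s14 (toLinAlgEquiv'.symm : _ ≃ₐ[F] _).toRingHom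
    (toLinAlgEquiv'.symm : _ ≃ₐ[F] _).surjective

end Field

section CommRing

variable {R : Type*} [CommRing R]

theorem Matrix.trinilClean_of_finite [Finite R] (hR : ∀ x : R, x ^ 3 = x) (ι : Type*)
    [Fintype ι] [DecidableEq ι] : TrinilClean (Matrix ι ι R) := by
  have := isReduced_of_pow_three_eq_self hR
  let e : Matrix ι ι R ≃+* ∀ I : MaximalSpectrum R, Matrix ι ι (R ⧸ I.asIdeal) :=
    (IsArtinianRing.equivPi R).toRingEquiv.mapMatrix.trans piRingEquiv
  refine TrinilClean.of_surjective_s14 (TrinilClean.pi fun I => ?_) e.symm.toRingHom e.symm.surjective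
  have := I.isMaximal
  let _ := Ideal.Quotient.field I.asIdeal
  refine trinilClean_of_field (fun x => ?_) ι
  obtain ⟨y, rfl⟩ := Ideal.Quotient.mk_surjective x
  rw [← map_pow, hR]

theorem exists_finite_subring_of_pow_three_eq_self (hR : ∀ x : R, x ^ 3 = x) {s : Set R}
    (hs : s.Finite) : ∃ T : Subring R, s ⊆ T ∧ Finite T := by
  have h6 : ((6 : ℕ) : R) = 0 := by push_cast; linear_combination hR 2
  let _ : Algebra (ZMod 6) R := (ZMod.castHom (ringChar.dvd h6) R).toAlgebra
  have : Module.Finite (ZMod 6) (Algebra.adjoin (ZMod 6) s) :=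
    Algebra.finite_adjoin_of_finite_of_isIntegral hs fun x _ =>
      ⟨Polynomial.X ^ 3 - Polynomial.X,
        Polynomial.monic_X_pow_sub (Polynomial.degree_X_le.trans_lt (by norm_num)),
        by simp [hR]⟩
  exact ⟨(Algebra.adjoin (ZMod 6) s).toSubring, Algebra.subset_adjoin,
    Module.finite_of_finite (ZMod 6)⟩

theorem Matrix.trinilClean_of_pow_three_eq_self (hR : ∀ x : R, x ^ 3 = x) (ι : Type*)
    [Fintype ι] [DecidableEq ι] : TrinilClean (Matrix ι ι R) := by
  intro A
  obtain ⟨T, hAT, hT⟩ := exists_finite_subring_of_pow_three_eq_self hR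
    (Set.finite_range fun p : ι × ι => A p.1 p.2)
  let A' : Matrix ι ι T := fun i j => ⟨A i j, hAT ⟨(i, j), rfl⟩⟩
  exact IsTrinilClean.map (trinilClean_of_finite (fun x : T => Subtype.ext (hR x)) ι A')
    T.subtype.mapMatrix

end CommRing

theorem tripotent_iff_comm_and_matrix_trinilClean (R : Type*) [Ring R]
    (hreg : ∀ a : R, ∃ x : R, a = a * x * a) (n : ℕ) (hn : 2 ≤ n) :
    (∀ x : R, x ^ 3 = x) ↔
      ((∀ a b : R, a * b = b * a) ∧ TrinilClean (Matrix (Fin n) (Fin n) R)) := by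
  constructor
  · intro hR
    have hcomm := mul_comm_of_pow_three_eq_self hR
    let _ : CommRing R := { ‹Ring R› with mul_comm := hcomm }
    exact ⟨hcomm, Matrix.trinilClean_of_pow_three_eq_self hR (Fin n)⟩
  · rintro ⟨hcomm, htc⟩
    have : Nonempty (Fin n) := ⟨⟨0, by omega⟩⟩
    exact pow_three_eq_self_of_trinilClean_matrix hreg hcomm htc
end
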